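/- Let p₁, p₂, …, pₙ be points in ℝ² with pᵢ ≠ pᵢ₊₁ for every i. The polygonal path on p₁, …, pₙ is self-approaching if and only if for every index i with 2 ≤ i ≤ n, the convex hull of the set {pᵢ, pᵢ₊₁, …, pₙ} is contained in the closed half-plane l⁺(p_{i−1}, p_i). -/

import Mathlib

/-- The point of the polygonal path `p 0, p 1, …` lying on segment `i`
(from `p i` to `p (i+1)`) at fraction `s ∈ [0,1]`. -/
noncomputable def polyPt (p : ℕ → EuclideanSpace ℝ (Fin 2)) (i : ℕ) (s : ℝ) :
    EuclideanSpace ℝ (Fin 2) :=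
  (1 - s) • p i + s • p (i + 1)

/-- `(i, s)` comes no later than `(j, t)` in the lexicographic order on parameters
of points of a polygonal path. -/
def ParamLE (i : ℕ) (s : ℝ) (j : ℕ) (t : ℝ) : Prop :=
  i < j ∨ (i = j ∧ s ≤ t)

/-- The polygonal path on the points `p 0, …, p m` (with `m` segments, indexed
`0, …, m-1`) is self-approaching: for any three of its points `a, b, c` in order
along the path, `dist a c ≥ dist b c`. -/
def IsSelfApproachingPoly (m : ℕ) (p : ℕ → EuclideanSpace ℝ (Fin 2)) : Prop :=
  ∀ (i j k : ℕ) (s t u : ℝ), i < m → j < m → k < m →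
    s ∈ Set.Icc (0 : ℝ) 1 → t ∈ Set.Icc (0 : ℝ) 1 → u ∈ Set.Icc (0 : ℝ) 1 →
    ParamLE i s j t → ParamLE j t k u →
    dist (polyPt p j t) (polyPt p k u) ≤ dist (polyPt p i s) (polyPt p k u)

/-- The polygonal path on the points `p 0, …, p m` has increasing chords: for any
four of its points `a, b, c, d` in order along the path, `dist a d ≥ dist b c`. -/
def IsIncreasingChordsPoly (m : ℕ) (p : ℕ → EuclideanSpace ℝ (Fin 2)) : Prop :=
  ∀ (i j k l : ℕ) (s t u v : ℝ), i < m → j < m → k < m → l < m →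
    s ∈ Set.Icc (0 : ℝ) 1 → t ∈ Set.Icc (0 : ℝ) 1 → u ∈ Set.Icc (0 : ℝ) 1 →
    v ∈ Set.Icc (0 : ℝ) 1 →
    ParamLE i s j t → ParamLE j t k u → ParamLE k u l v →
    dist (polyPt p j t) (polyPt p k u) ≤ dist (polyPt p i s) (polyPt p l v)

/-!
Along a segment from `u` to `v`, the squared distance to a point `c` is a convex quadratic in the
position, so it decreases all the way to `v` iff it still decreases at `v`, i.e. iff
`c ∈ l⁺(u, v)`. A self-approaching path therefore puts every later vertex, and hence (the
half-plane being convex) their convex hull, into `l⁺` of each segment. Conversely, that hull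
contains every later point of the path, so the distance to such a point decreases along each
earlier segment, and these decreases chain together across the vertices.
-/

open Set
open scoped InnerProductSpace

section InnerProductSpace

variable {E : Type*} [NormedAddCommGroup E] [InnerProductSpace ℝ E]

/-- The closed half-space `l⁺(u, v)`. -/
def halfSpaceBeyond (u v : E) : Set E :=
  {x | 0 ≤ ⟪x - v, v - u⟫_ℝ}

theorem convex_halfSpaceBeyond (u v : E) : Convex ℝ (halfSpaceBeyond u v) := by
  have h : halfSpaceBeyond u v = {x | ⟪v, v - u⟫_ℝ ≤ ⟪x, v - u⟫_ℝ} := by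
    ext x
    simp only [halfSpaceBeyond, mem_ofPred_eq, inner_sub_left, sub_nonneg]
  rw [h]
  exact convex_halfSpace_ge ((innerₛₗ ℝ).flip (v - u)).isLinear _

theorem dist_le_dist_of_real_inner_nonneg {x y c : E} (h : 0 ≤ ⟪c - y, y - x⟫_ℝ) :
    dist y c ≤ dist x c := by
  have hsq : dist x c ^ 2 = ‖x - y‖ ^ 2 + 2 * ⟪c - y, y - x⟫_ℝ + dist y c ^ 2 := by
    rw [dist_eq_norm, dist_eq_norm, ← sub_add_sub_cancel x y c, norm_add_sq_real,
      ← inner_neg_neg, neg_sub, neg_sub, real_inner_comm]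
  exact (sq_le_sq₀ dist_nonneg dist_nonneg).1 (by nlinarith [sq_nonneg ‖x - y‖])

theorem real_inner_nonneg_of_isMinOn_dist_segment {a b c : E}
    (h : IsMinOn (dist · c) (segment ℝ a b) b) : 0 ≤ ⟪c - b, b - a⟫_ℝ := by
  have hb : b ∈ segment ℝ a b := right_mem_segment ℝ a b
  have hinf : ‖c - b‖ = ⨅ x : segment ℝ a b, ‖c - x‖ := by
    simpa only [dist_comm _ c, dist_eq_norm] using (h.iInf_eq hb).symm
  have := (norm_eq_iInf_iff_real_inner_le_zero (convex_segment a b) hb).1 hinf a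
    (left_mem_segment ℝ a b)
  rw [← neg_sub b a, inner_neg_right] at this
  linarith

end InnerProductSpace

section PolygonalPath

variable {m : ℕ} {p : ℕ → EuclideanSpace ℝ (Fin 2)}

@[simp]
theorem polyPt_zero (p : ℕ → EuclideanSpace ℝ (Fin 2)) (j : ℕ) : polyPt p j 0 = p j := by
  simp [polyPt]

@[simp]
theorem polyPt_one (p : ℕ → EuclideanSpace ℝ (Fin 2)) (j : ℕ) : polyPt p j 1 = p (j + 1) := by
  simp [polyPt]

theorem polyPt_sub_polyPt (p : ℕ → EuclideanSpace ℝ (Fin 2)) (j : ℕ) (s t : ℝ) :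
    polyPt p j t - polyPt p j s = (t - s) • (p (j + 1) - p j) := by
  simp only [polyPt]
  module

theorem segment_eq_image_polyPt (p : ℕ → EuclideanSpace ℝ (Fin 2)) (j : ℕ) :
    segment ℝ (p j) (p (j + 1)) = polyPt p j '' Icc 0 1 :=
  segment_eq_image ℝ _ _

theorem paramLE_of_le_of_le {i j : ℕ} {s t : ℝ} (hij : i ≤ j) (hst : s ≤ t) :
    ParamLE i s j t :=
  hij.lt_or_eq.imp id fun h => ⟨h, hst⟩

theorem IsSelfApproachingPoly.isMinOn_dist_segment (h : IsSelfApproachingPoly m p) {j k : ℕ}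
    (hjk : j < k) (hkm : k ≤ m) :
    IsMinOn (dist · (p k)) (segment ℝ (p j) (p (j + 1))) (p (j + 1)) := by
  obtain ⟨l, rfl⟩ : ∃ l, k = l + 1 := ⟨k - 1, by omega⟩
  refine isMinOn_iff.2 ?_
  rw [segment_eq_image_polyPt]
  rintro _ ⟨s, hs, rfl⟩
  have hone : (1 : ℝ) ∈ Icc 0 1 := right_mem_Icc.2 zero_le_one
  simpa using h j j l s 1 1 (by omega) (by omega) (by omega) hs hone hone
    (paramLE_of_le_of_le le_rfl hs.2) (paramLE_of_le_of_le (by omega) le_rfl)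

theorem IsSelfApproachingPoly.convexHull_subset_halfSpaceBeyond (h : IsSelfApproachingPoly m p)
    (j : ℕ) : convexHull ℝ (p '' {k | j + 1 ≤ k ∧ k ≤ m}) ⊆ halfSpaceBeyond (p j) (p (j + 1)) := by
  refine convexHull_min ?_ (convex_halfSpaceBeyond _ _)
  rintro _ ⟨k, ⟨hjk, hkm⟩, rfl⟩
  exact real_inner_nonneg_of_isMinOn_dist_segment (h.isMinOn_dist_segment hjk hkm)

section ConvexHullSubset

variable (H : ∀ j < m,
  convexHull ℝ (p '' {k | j + 1 ≤ k ∧ k ≤ m}) ⊆ halfSpaceBeyond (p j) (p (j + 1)))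
include H

theorem real_inner_polyPt_sub_polyPt_nonneg {j k : ℕ} {t u : ℝ} (hjm : j < m) (hkm : k < m)
    (hu : u ∈ Icc 0 1) (ht : t ≤ 1) (hle : ParamLE j t k u) :
    0 ≤ ⟪polyPt p k u - polyPt p j t, p (j + 1) - p j⟫_ℝ := by
  rcases hle with hjk | ⟨rfl, htu⟩
  · have hk : k ∈ {l | j + 1 ≤ l ∧ l ≤ m} := ⟨hjk, hkm.le⟩
    have hk' : k + 1 ∈ {l | j + 1 ≤ l ∧ l ≤ m} := ⟨by omega, hkm⟩
    have hmem : polyPt p k u ∈ halfSpaceBeyond (p j) (p (j + 1)) :=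
      H j hjm <| segment_subset_convexHull (mem_image_of_mem p hk) (mem_image_of_mem p hk') <|
        segment_eq_image_polyPt p k ▸ mem_image_of_mem _ hu
    have hend : p (j + 1) - polyPt p j t = (1 - t) • (p (j + 1) - p j) := by
      simpa using polyPt_sub_polyPt p j t 1
    rw [← sub_add_sub_cancel _ (p (j + 1)), hend, inner_add_left, real_inner_smul_left]
    exact add_nonneg hmem (mul_nonneg (by linarith) real_inner_self_nonneg)
  · rw [polyPt_sub_polyPt, real_inner_smul_left]
    exact mul_nonneg (by linarith) real_inner_self_nonneg

theorem dist_polyPt_le_dist_polyPt {j k : ℕ} {t t' u : ℝ} (hjm : j < m) (hkm : k < m)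
    (hu : u ∈ Icc 0 1) (htt : t ≤ t') (ht' : t' ≤ 1) (hle : ParamLE j t' k u) :
    dist (polyPt p j t') (polyPt p k u) ≤ dist (polyPt p j t) (polyPt p k u) := by
  apply dist_le_dist_of_real_inner_nonneg
  rw [polyPt_sub_polyPt, real_inner_smul_right]
  exact mul_nonneg (sub_nonneg.2 htt) (real_inner_polyPt_sub_polyPt_nonneg H hjm hkm hu ht' hle)

theorem dist_vertex_le_dist_vertex {l j k : ℕ} {u : ℝ} (hkm : k < m) (hu : u ∈ Icc 0 1)
    (hlj : l ≤ j) (hjk : j ≤ k) : dist (p j) (polyPt p k u) ≤ dist (p l) (polyPt p k u) := by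
  induction j, hlj using Nat.le_induction with
  | base => rfl
  | succ j hlj ih =>
    calc dist (p (j + 1)) (polyPt p k u) = dist (polyPt p j 1) (polyPt p k u) := by
          rw [polyPt_one]
      _ ≤ dist (polyPt p j 0) (polyPt p k u) :=
          dist_polyPt_le_dist_polyPt H (by omega) hkm hu zero_le_one le_rfl (Or.inl (by omega))
      _ = dist (p j) (polyPt p k u) := by rw [polyPt_zero]
      _ ≤ dist (p l) (polyPt p k u) := ih (by omega)

theorem isSelfApproachingPoly_of_convexHull_subset : IsSelfApproachingPoly m p := by
  intro i j k s t u him hjm hkm hs ht hu hij hjk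
  have hjk_le : j ≤ k := by rcases hjk with h | ⟨h, -⟩ <;> omega
  rcases hij with hij | ⟨rfl, hst⟩
  · calc dist (polyPt p j t) (polyPt p k u) ≤ dist (polyPt p j 0) (polyPt p k u) :=
          dist_polyPt_le_dist_polyPt H hjm hkm hu ht.1 ht.2 hjk
      _ = dist (p j) (polyPt p k u) := by rw [polyPt_zero]
      _ ≤ dist (p (i + 1)) (polyPt p k u) := dist_vertex_le_dist_vertex H hkm hu hij hjk_le
      _ = dist (polyPt p i 1) (polyPt p k u) := by rw [polyPt_one]
      _ ≤ dist (polyPt p i s) (polyPt p k u) :=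
          dist_polyPt_le_dist_polyPt H him hkm hu hs.2 le_rfl (Or.inl (by omega))
  · exact dist_polyPt_le_dist_polyPt H him hkm hu hst ht.2 hjk

end ConvexHullSubset

theorem isSelfApproachingPoly_iff_forall_convexHull_subset :
    IsSelfApproachingPoly m p ↔ ∀ j < m,
      convexHull ℝ (p '' {k | j + 1 ≤ k ∧ k ≤ m}) ⊆ halfSpaceBeyond (p j) (p (j + 1)) :=
  ⟨fun h j _ => h.convexHull_subset_halfSpaceBeyond j, isSelfApproachingPoly_of_convexHull_subset⟩

end PolygonalPath

theorem isSelfApproachingPoly_iff_convexHull_general (m : ℕ)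
    (p : ℕ → EuclideanSpace ℝ (Fin 2)) :
    IsSelfApproachingPoly m p ↔
      ∀ i : ℕ, 1 ≤ i → i ≤ m →
        convexHull ℝ (p '' {k | i ≤ k ∧ k ≤ m}) ⊆
          {x : EuclideanSpace ℝ (Fin 2) | 0 ≤ (inner ℝ (x - p i) (p i - p (i - 1)) : ℝ)} := by
  rw [isSelfApproachingPoly_iff_forall_convexHull_subset]
  constructor
  · intro H i hi him
    obtain ⟨j, rfl⟩ : ∃ j, i = j + 1 := ⟨i - 1, by omega⟩
    rw [Nat.add_sub_cancel]
    exact H j him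
  · intro H j hj
    have := H (j + 1) (by omega) hj
    rwa [Nat.add_sub_cancel] at this

/-- A polygonal path `p 0, …, p m` is self-approaching iff for every `1 ≤ i ≤ m`,
the convex hull of `{p i, p (i+1), …, p m}` is contained in the closed half-plane
`l⁺(p (i-1), p i) = {x : ⟪x - p i, p i - p (i-1)⟫ ≥ 0}`. -/
theorem isSelfApproachingPoly_iff_convexHull (m : ℕ)
    (p : ℕ → EuclideanSpace ℝ (Fin 2)) (hne : ∀ i < m, p i ≠ p (i + 1)) :
    IsSelfApproachingPoly m p ↔
      ∀ i : ℕ, 1 ≤ i → i ≤ m →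
        convexHull ℝ (p '' {k | i ≤ k ∧ k ≤ m}) ⊆
          {x : EuclideanSpace ℝ (Fin 2) | 0 ≤ (inner ℝ (x - p i) (p i - p (i - 1)) : ℝ)} :=
  isSelfApproachingPoly_iff_convexHull_general m p
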